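/- arXiv:2008.00875 — 5 statements merged into one kernel-verified Lean document; each statement's English description precedes it below -/
import Mathlib

section
/- Let α and β be coprime integers with α odd and positive and β even. Then there exist an integer l ≥ 0 and integers m₀, m₁, …, m_{2l} with m_i ≠ 0 for all 1 ≤ i ≤ 2l, such that the finite continued fraction [2m₀; 2m₁, …, 2m_{2l}] is well defined (every tail [2m_i; 2m_{i+1}, …, 2m_{2l}] with i ≥ 1 is nonzero) and its value equals the rational number β/α. -/
/-- The value of the finite continued fraction `[c₀; c₁, …, c_k]`, defined
recursively by `v_k = c_k` and `v_i = c_i + 1/v_{i+1}`. -/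
def cfVal : List ℤ → ℚ
  | [] => 0
  | [c] => (c : ℚ)
  | c :: cs => (c : ℚ) + (cfVal cs)⁻¹

/-- The continued fraction given by a list of partial quotients is well defined
if every tail value with index `i ≥ 1` is nonzero. -/
def CFWellDef (L : List ℤ) : Prop :=
  ∀ i : ℕ, 1 ≤ i → i < L.length → cfVal (L.drop i) ≠ 0

/-!
Divide `b` by `2a` with the remainder taken in `(-|a|, |a|)`: since `a + b` is odd the remainder
`d` is never `±|a|`, so `b = 2 m₀ a + d` with `d` even and `|d| < |a|`. If `d = 0` then
`b / a = 2 m₀`. Otherwise divide `a` by `2d` in the same way, `a = 2 m₁ d + r` with `r` odd and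
`|r| < |d|`, so that `b / a = [2 m₀; 2 m₁, d / r]`, and `(r, d)` is again an odd/even pair
with a smaller denominator. A zero quotient would make the dividend equal to the remainder, which is
smaller than the divisor; from the second division on every dividend exceeds its divisor, so all
quotients but the first are nonzero.
-/

theorem Int.exists_eq_two_mul_mul_add_of_odd_add {a b : ℤ} (ha : a ≠ 0) (h : Odd (a + b)) :
    ∃ m r : ℤ, b = 2 * m * a + r ∧ |r| < |a| := by
  have hq := Int.mul_ediv_add_emod b (2 * |a|)
  set q := b / (2 * |a|)
  set s := b % (2 * |a|)
  have hs0 : 0 ≤ s := Int.emod_nonneg _ (by positivity)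
  have hs1 : s < 2 * |a| := Int.emod_lt_of_pos _ (by positivity)
  have hsa : s ≠ |a| := by
    intro hs
    refine Int.not_even_iff_odd.2 h ?_
    rw [← hq, hs]
    rcases abs_choice a with e | e <;> rw [e]
    exacts [⟨a * q + a, by ring⟩, ⟨-(a * q), by ring⟩]
  have hsign := Int.sign_mul_self_eq_abs a
  rcases hsa.lt_or_gt with hlt | hgt
  · refine ⟨a.sign * q, s, by linear_combination -hq - 2 * q * hsign, ?_⟩
    rwa [abs_of_nonneg hs0]
  · refine ⟨a.sign * (q + 1), s - 2 * |a|, by linear_combination -hq - 2 * (q + 1) * hsign, ?_⟩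
    rw [abs_lt]
    constructor <;> linarith

lemma cfVal_cons (c : ℤ) {L : List ℤ} (hL : L ≠ []) :
    cfVal (c :: L) = c + (cfVal L)⁻¹ := by
  cases L with
  | nil => contradiction
  | cons d L => rfl

lemma cfWellDef_cons_iff (c : ℤ) {L : List ℤ} (hL : L ≠ []) :
    CFWellDef (c :: L) ↔ cfVal L ≠ 0 ∧ CFWellDef L := by
  constructor
  · intro h
    refine ⟨h 1 le_rfl (by simpa using List.length_pos_iff.2 hL), fun i hi hiL => ?_⟩
    simpa using h (i + 1) (by omega) (by simpa using hiL)
  · rintro ⟨h0, h⟩ (_ | _ | i) hi hiL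
    · omega
    · simpa using h0
    · exact h (i + 1) (by omega) (by simpa using hiL)

lemma cfVal_cons_of_eq_mul_add {a b c d : ℤ} {L : List ℤ} (hL : L ≠ []) (ha : a ≠ 0)
    (hb : b = c * a + d) (hval : cfVal L = a / d) : cfVal (c :: L) = b / a := by
  rw [cfVal_cons c hL, hval, inv_div, hb]
  push_cast
  field_simp

def evenCF (l : ℕ) (m : ℕ → ℤ) : List ℤ :=
  (List.range (2 * l + 1)).map fun i => 2 * m i

def prependTwo (x y : ℤ) (m : ℕ → ℤ) : ℕ → ℤ
  | 0 => x
  | 1 => y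
  | i + 2 => m i

lemma evenCF_ne_nil (l : ℕ) (m : ℕ → ℤ) : evenCF l m ≠ [] := by
  simp [evenCF]

lemma evenCF_prependTwo (l : ℕ) (x y : ℤ) (m : ℕ → ℤ) :
    evenCF (l + 1) (prependTwo x y m) = 2 * x :: 2 * y :: evenCF l m := by
  simp only [evenCF, show 2 * (l + 1) + 1 = 2 * l + 1 + 1 + 1 by ring, List.range_succ_eq_map,
    List.map_cons, List.map_map]
  rfl

theorem exists_evenCF_eq_div {a b : ℤ} (ha : Odd a) (hb : Even b) :
    ∃ (l : ℕ) (m : ℕ → ℤ), (∀ i, 1 ≤ i → i ≤ 2 * l → m i ≠ 0) ∧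
      (|a| < |b| → m 0 ≠ 0) ∧ CFWellDef (evenCF l m) ∧ cfVal (evenCF l m) = b / a := by
  induction hn : a.natAbs using Nat.strong_induction_on generalizing a b with
  | _ n ih =>
  have ha0 : a ≠ 0 := by rintro rfl; simp at ha
  obtain ⟨m₀, d, hbd, hd⟩ := Int.exists_eq_two_mul_mul_add_of_odd_add ha0 (ha.add_even hb)
  have hd_even : Even d := by
    rw [show d = b - 2 * (m₀ * a) by linarith]
    exact hb.sub (even_two_mul _)
  have hm₀ : |a| < |b| → m₀ ≠ 0 := by
    rintro hab rfl
    rw [hbd, mul_zero, zero_mul, zero_add] at hab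
    linarith
  rcases eq_or_ne d 0 with rfl | hd0
  · refine ⟨0, fun _ => m₀, fun i _ _ => by omega, hm₀, fun i _ _ => ?_, ?_⟩
    · simp_all [evenCF]
    · simp only [evenCF, hbd, cfVal, mul_zero, add_zero, zero_add, List.range_one,
        List.map_singleton]
      push_cast
      field_simp
  obtain ⟨m₁, r, had, hr⟩ := Int.exists_eq_two_mul_mul_add_of_odd_add hd0 (hd_even.add_odd ha)
  have hr_odd : Odd r := by
    rw [show r = a - 2 * (m₁ * d) by linarith]
    exact ha.sub_even (even_two_mul _)
  have hr0 : r ≠ 0 := by rintro rfl; simp at hr_odd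
  have hm₁ : m₁ ≠ 0 := by
    rintro rfl
    rw [mul_zero, zero_mul, zero_add] at had
    rw [had] at hd
    linarith
  have hn' : r.natAbs < n := by
    rw [← hn]
    zify
    linarith
  obtain ⟨l, m, hm, hm0, hwd, hval⟩ := ih _ hn' hr_odd hd_even rfl
  refine ⟨l + 1, prependTwo m₀ m₁ m, ?_, hm₀, ?_⟩
  · rintro (_ | _ | _ | i) h1 h2
    exacts [absurd h1 (by omega), hm₁, hm0 hr, hm _ (by omega) (by omega)]
  have hN := evenCF_ne_nil l m
  have hval₁ : cfVal (2 * m₁ :: evenCF l m) = a / d := cfVal_cons_of_eq_mul_add hN hd0 had hval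
  rw [evenCF_prependTwo, cfWellDef_cons_iff _ (List.cons_ne_nil _ _), cfWellDef_cons_iff _ hN,
    hval₁, hval]
  exact ⟨⟨by positivity, by positivity, hwd⟩,
    cfVal_cons_of_eq_mul_add (List.cons_ne_nil _ _) ha0 hbd hval₁⟩

theorem continued_fraction_expansion_alpha_odd_beta_even_general
    (α β : ℤ) (hαodd : Odd α) (hβeven : Even β) :
    ∃ (l : ℕ) (m : ℕ → ℤ),
      (∀ i : ℕ, 1 ≤ i → i ≤ 2 * l → m i ≠ 0) ∧
      CFWellDef ((List.range (2 * l + 1)).map fun i => 2 * m i) ∧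
      cfVal ((List.range (2 * l + 1)).map fun i => 2 * m i) = (β : ℚ) / (α : ℚ) := by
  obtain ⟨l, m, hm, -, hwd, hval⟩ := exists_evenCF_eq_div hαodd hβeven
  exact ⟨l, m, hm, hwd, hval⟩

theorem continued_fraction_expansion_alpha_odd_beta_even
    (α β : ℤ) (hcop : IsCoprime α β) (hαodd : Odd α) (hαpos : 0 < α) (hβeven : Even β) :
    ∃ (l : ℕ) (m : ℕ → ℤ),
      (∀ i : ℕ, 1 ≤ i → i ≤ 2 * l → m i ≠ 0) ∧
      CFWellDef ((List.range (2 * l + 1)).map fun i => 2 * m i) ∧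
      cfVal ((List.range (2 * l + 1)).map fun i => 2 * m i) = (β : ℚ) / (α : ℚ) :=
  continued_fraction_expansion_alpha_odd_beta_even_general α β hαodd hβeven
end

section
/- Let k ≥ 2 be an integer. Let R₋₁, R₀, R₁, R'₁, R₂, R'₂ and, for each integer i with 2 ≤ i ≤ k, R_{2i−1}, R'_{2i−1}, R_{2i}, R'_{2i} be 2×2 matrices over ℂ[t, t⁻¹] whose supports satisfy: supp R₋₁ ⊆ {−1, 0}; supp R₀ ⊆ {0, 1}; supp R₁ ⊆ {0, 1}; supp R'₁ ⊆ {0, 1}; supp R₂ ⊆ {1, 2}; supp R'₂ ⊆ {1, 2}; for even i with 2 ≤ i ≤ k: supp R_{2i−1} ⊆ {−2, −1}, supp R'_{2i−1} ⊆ {−1, 0}, supp R_{2i} ⊆ {−1, 0}, supp R'_{2i} ⊆ {0, 1}; and for odd i with 3 ≤ i ≤ k: supp R_{2i−1} ⊆ {−1, 0}, supp R'_{2i−1} ⊆ {0, 1}, supp R_{2i} ⊆ {0, 1}, supp R'_{2i} ⊆ {1, 2}. Define N₀ = R₀, N₁ = R₁ − R'₁ R₋₁, N₂ = R₂ − R'₂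 R₋₁, and for 2 ≤ i ≤ k: N_{2i−1} = −R_{2i−1} N_{2i−4} − R'_{2i−1} N_{2i−3} and N_{2i} = −R_{2i} N_{2i−4} − R'_{2i} N_{2i−3}. Then for every 1 ≤ i ≤ k: if i is even, supp N_{2i−1} ⊆ {−i/2−1, …, i/2} and supp N_{2i} ⊆ {−i/2, …, i/2+1}; if i is odd, supp N_{2i−1} ⊆ {−(i+1)/2, …, (i+1)/2} and supp N_{2i} ⊆ {−(i−1)/2, …, (i+3)/2}. -/
/-!
A product of Laurent polynomial matrices is supported in the sumset of the supports, so every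
step of the recurrence is interval arithmetic. The bounds assumed on `R_{2i-1}, R'_{2i-1}, R_{2i},
R'_{2i}` and those claimed for `N_{2i-1}, N_{2i}` depend on the parity of `i`, but each is a single
formula in `i % 2` and `⌊i / 2⌋`. In that form the bounds for `i - 2` and `i - 1` give those for
`i` with no case split, and the induction starts from `N₀ = R₀`, `N₁` and `N₂`.
-/

/-- The coefficient of `t^j` in a Laurent polynomial. -/
noncomputable def lcoeff (p : LaurentPolynomial ℂ) (j : ℤ) : ℂ := (AddMonoidAlgebra.coeff p : ℤ →₀ ℂ) j

/-- `SuppIn P S` : the support of the Laurent polynomial matrix `P` is contained in `S`. -/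
def SuppIn (P : Matrix (Fin 2) (Fin 2) (LaurentPolynomial ℂ)) (S : Set ℤ) : Prop :=
  ∀ j : ℤ, j ∉ S → ∀ a b : Fin 2, lcoeff (P a b) j = 0

open Set Pointwise

lemma lcoeff_neg (p : LaurentPolynomial ℂ) (j : ℤ) : lcoeff (-p) j = -lcoeff p j := rfl

lemma lcoeff_sub (p q : LaurentPolynomial ℂ) (j : ℤ) :
    lcoeff (p - q) j = lcoeff p j - lcoeff q j := rfl

lemma lcoeff_sum {ι : Type*} (s : Finset ι) (f : ι → LaurentPolynomial ℂ) (j : ℤ) :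
    lcoeff (∑ z ∈ s, f z) j = ∑ z ∈ s, lcoeff (f z) j := by
  simp [lcoeff, Finsupp.finsetSum_apply]

lemma lcoeff_mul_eq_zero {p q : LaurentPolynomial ℂ} {S T : Set ℤ} {j : ℤ}
    (hp : ∀ x ∉ S, lcoeff p x = 0) (hq : ∀ y ∉ T, lcoeff q y = 0) (hj : j ∉ S + T) :
    lcoeff (p * q) j = 0 := by
  by_contra h
  obtain ⟨x, hx, y, hy, rfl⟩ := Finset.mem_add.1 <|
    AddMonoidAlgebra.support_coeff_mul_subset p q (Finsupp.mem_support_iff.2 h)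
  exact hj ⟨x, not_not.1 fun hxS ↦ Finsupp.mem_support_iff.1 hx (hp x hxS),
    y, not_not.1 fun hyT ↦ Finsupp.mem_support_iff.1 hy (hq y hyT), rfl⟩

namespace SuppIn

variable {P Q : Matrix (Fin 2) (Fin 2) (LaurentPolynomial ℂ)} {S T : Set ℤ}

lemma mono (hP : SuppIn P S) (hST : S ⊆ T) : SuppIn P T :=
  fun j hj ↦ hP j (fun hjS ↦ hj (hST hjS))

lemma neg (hP : SuppIn P S) : SuppIn (-P) S := by
  intro j hj a b
  rw [Matrix.neg_apply, lcoeff_neg, hP j hj a b, neg_zero]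

lemma sub (hP : SuppIn P S) (hQ : SuppIn Q S) : SuppIn (P - Q) S := by
  intro j hj a b
  rw [Matrix.sub_apply, lcoeff_sub, hP j hj a b, hQ j hj a b, sub_zero]

lemma mul (hP : SuppIn P S) (hQ : SuppIn Q T) : SuppIn (P * Q) (S + T) := by
  intro j hj a b
  rw [Matrix.mul_apply, lcoeff_sum]
  exact Finset.sum_eq_zero fun z _ ↦
    lcoeff_mul_eq_zero (fun x hx ↦ hP x hx a z) (fun y hy ↦ hQ y hy z b) hj

lemma Icc_of_pair {a b c d : ℤ} (hP : SuppIn P {a, b}) (ha : a ∈ Icc c d) (hb : b ∈ Icc c d) :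
    SuppIn P (Icc c d) :=
  hP.mono (pair_subset ha hb)

lemma mul_Icc {a b c d : ℤ} (hP : SuppIn P (Icc a b)) (hQ : SuppIn Q (Icc c d)) :
    SuppIn (P * Q) (Icc (a + c) (b + d)) :=
  (hP.mul hQ).mono (Icc_add_Icc_subset _ _ _ _)

lemma neg_mul_sub_mul {A B : Matrix (Fin 2) (Fin 2) (LaurentPolynomial ℂ)}
    {a b c d e f g h lo hi : ℤ}
    (hA : SuppIn A (Icc a b)) (hP : SuppIn P (Icc c d))
    (hB : SuppIn B (Icc e f)) (hQ : SuppIn Q (Icc g h))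
    (hlo₁ : lo ≤ a + c) (hhi₁ : b + d ≤ hi) (hlo₂ : lo ≤ e + g) (hhi₂ : f + h ≤ hi) :
    SuppIn (-A * P - B * Q) (Icc lo hi) :=
  ((hA.neg.mul_Icc hP).mono (Icc_subset_Icc hlo₁ hhi₁)).sub
    ((hB.mul_Icc hQ).mono (Icc_subset_Icc hlo₂ hhi₂))

lemma sub_mul_of_pair {R R' M : Matrix (Fin 2) (Fin 2) (LaurentPolynomial ℂ)} {a b : ℤ}
    (hR : SuppIn R {a, b}) (hR' : SuppIn R' {a, b}) (hM : SuppIn M {-1, 0}) (hab : a ≤ b) :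
    SuppIn (R - R' * M) (Icc (a - 1) b) := by
  have hM' : SuppIn M (Icc (-1) 0) := hM.Icc_of_pair (by norm_num) (by norm_num)
  have hR'M := (hR'.Icc_of_pair ⟨le_rfl, hab⟩ ⟨hab, le_rfl⟩).mul_Icc hM'
  exact (hR.Icc_of_pair ⟨by omega, hab⟩ ⟨by omega, le_rfl⟩).sub
    (hR'M.mono (Icc_subset_Icc (by omega) (by omega)))

end SuppIn

-- the support bounds for `N_{2i-1}` and `N_{2i}`, for either parity of `i`
def oddWindow (i : ℕ) : Set ℤ := Icc (-(((i : ℤ) + 2) / 2)) (((i : ℤ) + 1) / 2)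

def evenWindow (i : ℕ) : Set ℤ := Icc (-((i : ℤ) / 2)) (((i : ℤ) + 3) / 2)

lemma oddWindow_of_even {i : ℕ} (he : Even i) :
    oddWindow i = Icc (-((i : ℤ) / 2) - 1) ((i : ℤ) / 2) := by
  have := Nat.even_iff.1 he
  unfold oddWindow; congr 1 <;> omega

lemma evenWindow_of_even {i : ℕ} (he : Even i) :
    evenWindow i = Icc (-((i : ℤ) / 2)) ((i : ℤ) / 2 + 1) := by
  have := Nat.even_iff.1 he
  unfold evenWindow; congr 1; omega

lemma oddWindow_of_odd {i : ℕ} (ho : Odd i) :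
    oddWindow i = Icc (-(((i : ℤ) + 1) / 2)) (((i : ℤ) + 1) / 2) := by
  have := Nat.odd_iff.1 ho
  unfold oddWindow; congr 1; omega

lemma evenWindow_of_odd {i : ℕ} (ho : Odd i) :
    evenWindow i = Icc (-(((i : ℤ) - 1) / 2)) (((i : ℤ) + 3) / 2) := by
  have := Nat.odd_iff.1 ho
  unfold evenWindow; congr 1; omega

section Recurrence

variable {i : ℕ} {A B P Q : Matrix (Fin 2) (Fin 2) (LaurentPolynomial ℂ)}

lemma SuppIn.neg_mul_sub_mul_oddWindow (hi : 2 ≤ i)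
    (hA : SuppIn A (Icc ((i : ℤ) % 2 - 2) ((i : ℤ) % 2 - 1)))
    (hB : SuppIn B (Icc ((i : ℤ) % 2 - 1) ((i : ℤ) % 2)))
    (hP : SuppIn P (evenWindow (i - 2))) (hQ : SuppIn Q (oddWindow (i - 1))) :
    SuppIn (-A * P - B * Q) (oddWindow i) :=
  hA.neg_mul_sub_mul hP hB hQ (by omega) (by omega) (by omega) (by omega)

lemma SuppIn.neg_mul_sub_mul_evenWindow (hi : 2 ≤ i)
    (hA : SuppIn A (Icc ((i : ℤ) % 2 - 1) ((i : ℤ) % 2)))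
    (hB : SuppIn B (Icc ((i : ℤ) % 2) ((i : ℤ) % 2 + 1)))
    (hP : SuppIn P (evenWindow (i - 2))) (hQ : SuppIn Q (oddWindow (i - 1))) :
    SuppIn (-A * P - B * Q) (evenWindow i) :=
  hA.neg_mul_sub_mul hP hB hQ (by omega) (by omega) (by omega) (by omega)

end Recurrence

lemma suppIn_coefficients_of_parity {k i : ℕ}
    {Rr Rr' : ℕ → Matrix (Fin 2) (Fin 2) (LaurentPolynomial ℂ)}
    (hReven : ∀ i : ℕ, 2 ≤ i → i ≤ k → Even i →
      SuppIn (Rr (2 * i - 1)) ({-2, -1} : Set ℤ) ∧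
      SuppIn (Rr' (2 * i - 1)) ({-1, 0} : Set ℤ) ∧
      SuppIn (Rr (2 * i)) ({-1, 0} : Set ℤ) ∧
      SuppIn (Rr' (2 * i)) ({0, 1} : Set ℤ))
    (hRodd : ∀ i : ℕ, 3 ≤ i → i ≤ k → Odd i →
      SuppIn (Rr (2 * i - 1)) ({-1, 0} : Set ℤ) ∧
      SuppIn (Rr' (2 * i - 1)) ({0, 1} : Set ℤ) ∧
      SuppIn (Rr (2 * i)) ({0, 1} : Set ℤ) ∧
      SuppIn (Rr' (2 * i)) ({1, 2} : Set ℤ))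
    (hi : 2 ≤ i) (hik : i ≤ k) :
    SuppIn (Rr (2 * i - 1)) (Icc ((i : ℤ) % 2 - 2) ((i : ℤ) % 2 - 1)) ∧
      SuppIn (Rr' (2 * i - 1)) (Icc ((i : ℤ) % 2 - 1) ((i : ℤ) % 2)) ∧
      SuppIn (Rr (2 * i)) (Icc ((i : ℤ) % 2 - 1) ((i : ℤ) % 2)) ∧
      SuppIn (Rr' (2 * i)) (Icc ((i : ℤ) % 2) ((i : ℤ) % 2 + 1)) := by
  rcases Nat.even_or_odd i with he | ho
  · have := Nat.even_iff.1 he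
    obtain ⟨hA, hB, hC, hD⟩ := hReven i hi hik he
    refine ⟨hA.Icc_of_pair ?_ ?_, hB.Icc_of_pair ?_ ?_, hC.Icc_of_pair ?_ ?_,
      hD.Icc_of_pair ?_ ?_⟩ <;> exact ⟨by omega, by omega⟩
  · have := Nat.odd_iff.1 ho
    obtain ⟨hA, hB, hC, hD⟩ := hRodd i (by omega) hik ho
    refine ⟨hA.Icc_of_pair ?_ ?_, hB.Icc_of_pair ?_ ?_, hC.Icc_of_pair ?_ ?_,
      hD.Icc_of_pair ?_ ?_⟩ <;> exact ⟨by omega, by omega⟩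

theorem support_of_N_matrices_general
    (k : ℕ)
    (Rm1 R0 : Matrix (Fin 2) (Fin 2) (LaurentPolynomial ℂ))
    (Rr Rr' : ℕ → Matrix (Fin 2) (Fin 2) (LaurentPolynomial ℂ))
    (hRm1 : SuppIn Rm1 ({-1, 0} : Set ℤ))
    (hR0 : SuppIn R0 ({0, 1} : Set ℤ))
    (hR1 : SuppIn (Rr 1) ({0, 1} : Set ℤ))
    (hR1' : SuppIn (Rr' 1) ({0, 1} : Set ℤ))
    (hR2 : SuppIn (Rr 2) ({1, 2} : Set ℤ))
    (hR2' : SuppIn (Rr' 2) ({1, 2} : Set ℤ))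
    (hReven : ∀ i : ℕ, 2 ≤ i → i ≤ k → Even i →
      SuppIn (Rr (2 * i - 1)) ({-2, -1} : Set ℤ) ∧
      SuppIn (Rr' (2 * i - 1)) ({-1, 0} : Set ℤ) ∧
      SuppIn (Rr (2 * i)) ({-1, 0} : Set ℤ) ∧
      SuppIn (Rr' (2 * i)) ({0, 1} : Set ℤ))
    (hRodd : ∀ i : ℕ, 3 ≤ i → i ≤ k → Odd i →
      SuppIn (Rr (2 * i - 1)) ({-1, 0} : Set ℤ) ∧
      SuppIn (Rr' (2 * i - 1)) ({0, 1} : Set ℤ) ∧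
      SuppIn (Rr (2 * i)) ({0, 1} : Set ℤ) ∧
      SuppIn (Rr' (2 * i)) ({1, 2} : Set ℤ))
    (N : ℕ → Matrix (Fin 2) (Fin 2) (LaurentPolynomial ℂ))
    (hN0 : N 0 = R0)
    (hN1 : N 1 = Rr 1 - Rr' 1 * Rm1)
    (hN2 : N 2 = Rr 2 - Rr' 2 * Rm1)
    (hNodd : ∀ i : ℕ, 2 ≤ i → i ≤ k →
      N (2 * i - 1) = -(Rr (2 * i - 1)) * N (2 * i - 4) - Rr' (2 * i - 1) * N (2 * i - 3))
    (hNeven : ∀ i : ℕ, 2 ≤ i → i ≤ k →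
      N (2 * i) = -(Rr (2 * i)) * N (2 * i - 4) - Rr' (2 * i) * N (2 * i - 3)) :
    ∀ i : ℕ, 1 ≤ i → i ≤ k →
      (Even i →
        SuppIn (N (2 * i - 1)) (Set.Icc (-((i : ℤ) / 2) - 1) ((i : ℤ) / 2)) ∧
        SuppIn (N (2 * i)) (Set.Icc (-((i : ℤ) / 2)) ((i : ℤ) / 2 + 1))) ∧
      (Odd i →
        SuppIn (N (2 * i - 1)) (Set.Icc (-(((i : ℤ) + 1) / 2)) (((i : ℤ) + 1) / 2)) ∧
        SuppIn (N (2 * i)) (Set.Icc (-(((i : ℤ) - 1) / 2)) (((i : ℤ) + 3) / 2))) := by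
  have hN0' : SuppIn (N 0) (evenWindow 0) :=
    hN0 ▸ hR0.Icc_of_pair (by norm_num [evenWindow]) (by norm_num [evenWindow])
  have hN1' : SuppIn (N 1) (oddWindow 1) :=
    hN1 ▸ (hR1.sub_mul_of_pair hR1' hRm1 zero_le_one).mono (by norm_num [oddWindow])
  have hN2' : SuppIn (N 2) (evenWindow 1) :=
    hN2 ▸ (hR2.sub_mul_of_pair hR2' hRm1 one_le_two).mono (by norm_num [evenWindow])
  have hwindows : ∀ i, 1 ≤ i → i ≤ k →
      SuppIn (N (2 * i - 1)) (oddWindow i) ∧ SuppIn (N (2 * i)) (evenWindow i) := by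
    intro i
    induction i using Nat.strong_induction_on with | _ i IH =>
    intro hi1 hik
    obtain rfl | hi2 := (show i = 1 ∨ 2 ≤ i by omega)
    · exact ⟨hN1', hN2'⟩
    have hP : SuppIn (N (2 * i - 4)) (evenWindow (i - 2)) := by
      obtain rfl | hi3 := (show i = 2 ∨ 3 ≤ i by omega)
      · exact hN0'
      · rw [show 2 * i - 4 = 2 * (i - 2) by omega]
        exact (IH (i - 2) (by omega) (by omega) (by omega)).2
    have hQ : SuppIn (N (2 * i - 3)) (oddWindow (i - 1)) := by
      rw [show 2 * i - 3 = 2 * (i - 1) - 1 by omega]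
      exact (IH (i - 1) (by omega) (by omega) (by omega)).1
    obtain ⟨hA, hB, hC, hD⟩ := suppIn_coefficients_of_parity hReven hRodd hi2 hik
    rw [hNodd i hi2 hik, hNeven i hi2 hik]
    exact ⟨hA.neg_mul_sub_mul_oddWindow hi2 hB hP hQ, hC.neg_mul_sub_mul_evenWindow hi2 hD hP hQ⟩
  intro i hi1 hik
  obtain ⟨hodd, heven⟩ := hwindows i hi1 hik
  exact ⟨fun he ↦ ⟨oddWindow_of_even he ▸ hodd, evenWindow_of_even he ▸ heven⟩,
    fun ho ↦ ⟨oddWindow_of_odd ho ▸ hodd, evenWindow_of_odd ho ▸ heven⟩⟩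

theorem support_of_N_matrices
    (k : ℕ) (hk : 2 ≤ k)
    (Rm1 R0 : Matrix (Fin 2) (Fin 2) (LaurentPolynomial ℂ))
    (Rr Rr' : ℕ → Matrix (Fin 2) (Fin 2) (LaurentPolynomial ℂ))
    (hRm1 : SuppIn Rm1 ({-1, 0} : Set ℤ))
    (hR0 : SuppIn R0 ({0, 1} : Set ℤ))
    (hR1 : SuppIn (Rr 1) ({0, 1} : Set ℤ))
    (hR1' : SuppIn (Rr' 1) ({0, 1} : Set ℤ))
    (hR2 : SuppIn (Rr 2) ({1, 2} : Set ℤ))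
    (hR2' : SuppIn (Rr' 2) ({1, 2} : Set ℤ))
    (hReven : ∀ i : ℕ, 2 ≤ i → i ≤ k → Even i →
      SuppIn (Rr (2 * i - 1)) ({-2, -1} : Set ℤ) ∧
      SuppIn (Rr' (2 * i - 1)) ({-1, 0} : Set ℤ) ∧
      SuppIn (Rr (2 * i)) ({-1, 0} : Set ℤ) ∧
      SuppIn (Rr' (2 * i)) ({0, 1} : Set ℤ))
    (hRodd : ∀ i : ℕ, 3 ≤ i → i ≤ k → Odd i →
      SuppIn (Rr (2 * i - 1)) ({-1, 0} : Set ℤ) ∧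
      SuppIn (Rr' (2 * i - 1)) ({0, 1} : Set ℤ) ∧
      SuppIn (Rr (2 * i)) ({0, 1} : Set ℤ) ∧
      SuppIn (Rr' (2 * i)) ({1, 2} : Set ℤ))
    (N : ℕ → Matrix (Fin 2) (Fin 2) (LaurentPolynomial ℂ))
    (hN0 : N 0 = R0)
    (hN1 : N 1 = Rr 1 - Rr' 1 * Rm1)
    (hN2 : N 2 = Rr 2 - Rr' 2 * Rm1)
    (hNodd : ∀ i : ℕ, 2 ≤ i → i ≤ k →
      N (2 * i - 1) = -(Rr (2 * i - 1)) * N (2 * i - 4) - Rr' (2 * i - 1) * N (2 * i - 3))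
    (hNeven : ∀ i : ℕ, 2 ≤ i → i ≤ k →
      N (2 * i) = -(Rr (2 * i)) * N (2 * i - 4) - Rr' (2 * i) * N (2 * i - 3)) :
    ∀ i : ℕ, 1 ≤ i → i ≤ k →
      (Even i →
        SuppIn (N (2 * i - 1)) (Set.Icc (-((i : ℤ) / 2) - 1) ((i : ℤ) / 2)) ∧
        SuppIn (N (2 * i)) (Set.Icc (-((i : ℤ) / 2)) ((i : ℤ) / 2 + 1))) ∧
      (Odd i →
        SuppIn (N (2 * i - 1)) (Set.Icc (-(((i : ℤ) + 1) / 2)) (((i : ℤ) + 1) / 2)) ∧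
        SuppIn (N (2 * i)) (Set.Icc (-(((i : ℤ) - 1) / 2)) (((i : ℤ) + 3) / 2))) :=
  support_of_N_matrices_general k Rm1 R0 Rr Rr' hRm1 hR0 hR1 hR1' hR2 hR2' hReven hRodd N hN0 hN1
    hN2 hNodd hNeven
end

section
/- Let R be a commutative ring, let k ≥ 2 be an integer, and let R₋₁, R₀ and R_j, R'_j (for 1 ≤ j ≤ 2k) be 2×2 matrices over R. Let A be the square matrix of block size (2k+3)×(2k+3) (each block a 2×2 matrix over R) whose blocks are: A[0,0] = R₋₁, A[0,1] = E; A[1,0] = R₀, A[1,2] = E; A[2,0] = R₁, A[2,1] = R'₁, A[2,3] = E; A[3,0] = R₂, A[3,1] = R'₂, A[3,4] = E; for each 2 ≤ i ≤ k: A[2i, 2i−2] = R_{2i−1}, A[2i, 2i−1] = R'_{2i−1}, A[2i, 2i+1] = E and A[2i+1, 2i−2] = R_{2i}, A[2i+1, 2i−1] = R'_{2i}, A[2i+1, 2i+2] = E; A[2k+2, 2k+2] = E; and all other blocks zero, where E denotes the 2×2 identity matrix. Define N₀ = R₀, N₁ = R₁ − R'₁ R₋₁, N₂ = R₂ − R'₂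 R₋₁, and for 2 ≤ i ≤ k: N_{2i−1} = −R_{2i−1} N_{2i−4} − R'_{2i−1} N_{2i−3} and N_{2i} = −R_{2i} N_{2i−4} − R'_{2i} N_{2i−3}. Then det A = det N_{2k}. -/
/-!
The block column `u = (E, -R₋₁, -N₀, -N₁, …, -N_{2k})` is annihilated by every block row
of `A` except the last one, which sends it to `-N_{2k}`: this is exactly the recurrence
defining `N`.
Replacing block column `0` of `A` by `A u` is a column operation of determinant one (as `u₀ = E`),
and moving that column to the end permutes the `2k + 3` block columns cyclically, once for each of
the two coordinates inside a block, hence with sign `+1`. The result is block lower triangular,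
with diagonal blocks `E, …, E, -N_{2k}`.
-/

/-- The 2×2 block in block-row `I` and block-column `J` of the matrix `A`
of Statement 4:  `A[0,0] = R₋₁`, `A[0,1] = E`; `A[1,0] = R₀`, `A[1,2] = E`;
for `1 ≤ i ≤ k`: `A[2i, 2i−2] = R_{2i−1}`, `A[2i, 2i−1] = R'_{2i−1}`,
`A[2i, 2i+1] = E`, `A[2i+1, 2i−2] = R_{2i}`, `A[2i+1, 2i−1] = R'_{2i}`,
`A[2i+1, 2i+2] = E`; `A[2k+2, 2k+2] = E`; all other blocks zero.
Here `Rm1 = R₋₁`, `R0 = R₀`, `Rr j = R_j` and `Rr' j = R'_j`. -/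
def blockEntry {R : Type*} [CommRing R] (k : ℕ)
    (Rm1 R0 : Matrix (Fin 2) (Fin 2) R) (Rr Rr' : ℕ → Matrix (Fin 2) (Fin 2) R)
    (I J : ℕ) : Matrix (Fin 2) (Fin 2) R :=
  if I = 0 then (if J = 0 then Rm1 else if J = 1 then 1 else 0)
  else if I = 1 then (if J = 0 then R0 else if J = 2 then 1 else 0)
  else if I = 2 * k + 2 then (if J = 2 * k + 2 then 1 else 0)
  else if I % 2 = 0 then
    -- `I = 2i` with `1 ≤ i ≤ k`
    (if J = I - 2 then Rr (I - 1) else if J = I - 1 then Rr' (I - 1)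
      else if J = I + 1 then 1 else 0)
  else
    -- `I = 2i + 1` with `1 ≤ i ≤ k`
    (if J = I - 3 then Rr (I - 1) else if J = I - 2 then Rr' (I - 1)
      else if J = I + 1 then 1 else 0)

namespace Matrix

open Equiv Finset

variable {ι κ R : Type*} [Fintype ι] [DecidableEq ι] [Fintype κ] [DecidableEq κ] [CommRing R]

theorem det_comp_of_isLowerTriangular [LinearOrder ι] (M : Matrix ι ι (Matrix κ κ R))
    (h : M.IsLowerTriangular) :
    (comp ι ι κ κ R M).det = ∏ i, (M i i).det := by
  have hM : (comp ι ι κ κ R M).BlockTriangular fun p => OrderDual.toDual p.1 :=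
    fun p q hpq => by simp [h hpq]
  rw [hM.det_fintype]
  refine Fintype.prod_equiv OrderDual.ofDual _ _ fun i => ?_
  let e : {p : ι × κ // OrderDual.toDual p.1 = i} ≃ κ :=
    { toFun := fun p => p.1.2
      invFun := fun c => ⟨(OrderDual.ofDual i, c), rfl⟩
      left_inv := by rintro ⟨⟨a, c⟩, rfl⟩; rfl
      right_inv := fun _ => rfl }
  have hblock : (comp ι ι κ κ R M).toSquareBlock (fun p => OrderDual.toDual p.1) i
      = (M (OrderDual.ofDual i) (OrderDual.ofDual i)).submatrix e e := by
    ext ⟨⟨a, c⟩, ha⟩ ⟨⟨b, d⟩, hb⟩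
    cases ha; cases hb; rfl
  rw [hblock, det_submatrix_equiv_self]

theorem det_comp_permute' (σ : Perm ι) (M : Matrix ι ι (Matrix κ κ R)) :
    (comp ι ι κ κ R (M.submatrix id σ)).det
      = (Perm.sign σ ^ Fintype.card κ : ℤˣ) * (comp ι ι κ κ R M).det := by
  have hcomp : comp ι ι κ κ R (M.submatrix id σ)
      = (comp ι ι κ κ R M).submatrix id (prodCongrLeft fun _ => σ) := rfl
  rw [hcomp, det_permute', Perm.sign_prodCongrLeft, prod_const, card_univ]

theorem det_comp_of_lowerHessenberg {m : ℕ} (hκ : Even (Fintype.card κ))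
    (M : Matrix (Fin (m + 1)) (Fin (m + 1)) (Matrix κ κ R))
    (h_upper : ∀ I J : Fin (m + 1), (I : ℕ) + 2 ≤ J → M I J = 0)
    (h_super : ∀ I J : Fin (m + 1), (J : ℕ) = I + 1 → M I J = 1)
    (u : Fin (m + 1) → Matrix κ κ R) (hu : u 0 = 1)
    (h_null : ∀ I, I ≠ Fin.last m → ∑ K, M I K * u K = 0) :
    (comp _ _ κ κ R M).det = (∑ K, M (Fin.last m) K * u K).det := by
  let T : Matrix (Fin (m + 1)) (Fin (m + 1)) (Matrix κ κ R) :=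
    of fun K J => if J = 0 then u K else if K = J then 1 else 0
  have hT : (comp _ _ κ κ R T).det = 1 := by
    rw [det_comp_of_isLowerTriangular T fun K J (hKJ : K < J) => by
      simp [T, (Fin.zero_le K).trans_lt hKJ |>.ne', hKJ.ne]]
    refine prod_eq_one fun K _ => ?_
    rcases eq_or_ne K 0 with rfl | hK <;> simp [T, *]
  have hMT : ∀ I J, (M * T) I J = if J = 0 then ∑ K, M I K * u K else M I J := by
    intro I J
    split_ifs with hJ <;> simp [mul_apply, T, hJ]
  let L := (M * T).submatrix id (finRotate (m + 1))
  have hL : ∀ I J, L I J = if J = Fin.last m then ∑ K, M I K * u K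
      else M I (finRotate (m + 1) J) := by
    intro I J
    have hrot : finRotate (m + 1) J = 0 ↔ J = Fin.last m := by
      rw [← finRotate_last, (finRotate _).apply_eq_iff_eq]
    simp only [L, submatrix_apply, id, hMT, hrot]
  have hL_lower : L.IsLowerTriangular := by
    intro I J (hIJ : I < J)
    rw [hL]
    split_ifs with hJ
    · exact h_null I (hJ ▸ hIJ.ne)
    · exact h_upper _ _ (by rw [coe_finRotate_of_ne_last hJ]; exact Nat.succ_le_succ hIJ)
  have hL_diag : ∀ I : Fin m, L I.castSucc I.castSucc = 1 :=
    fun I => by rw [hL, if_neg (Fin.castSucc_ne_last I),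
      h_super _ _ (coe_finRotate_of_ne_last (Fin.castSucc_ne_last I))]
  have hsign : Perm.sign (finRotate (m + 1)) ^ Fintype.card κ = 1 := by
    obtain ⟨j, hj⟩ := hκ
    rw [hj, ← two_mul, pow_mul, Int.units_sq, one_pow]
  calc (comp _ _ κ κ R M).det
      = (comp _ _ κ κ R (M * T)).det := by
        rw [show comp _ _ κ κ R (M * T) = comp _ _ κ κ R M * comp _ _ κ κ R T from
          map_mul (compRingEquiv _ κ R) M T, det_mul, hT, mul_one]
    _ = (comp _ _ κ κ R L).det := by
        rw [det_comp_permute', hsign, Units.val_one, Int.cast_one, one_mul]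
    _ = (∑ K, M (Fin.last m) K * u K).det := by
        rw [det_comp_of_isLowerTriangular L hL_lower, Fin.prod_univ_castSucc]
        simp [hL_diag, hL]

end Matrix

section BlockEntry

open Finset

variable {R : Type*} [CommRing R] (k : ℕ) (Rm1 R0 : Matrix (Fin 2) (Fin 2) R)
  (Rr Rr' : ℕ → Matrix (Fin 2) (Fin 2) R)

theorem blockEntry_eq_zero_of_add_two_le {I J : ℕ} (h : I + 2 ≤ J) :
    blockEntry k Rm1 R0 Rr Rr' I J = 0 := by
  unfold blockEntry
  split_ifs <;> first | rfl | (exfalso; omega)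

theorem blockEntry_add_one {I : ℕ} (hI : I < 2 * k + 2) :
    blockEntry k Rm1 R0 Rr Rr' I (I + 1) = 1 := by
  unfold blockEntry
  split_ifs <;> first | rfl | (exfalso; omega)

theorem blockEntry_two_mul_add {i r : ℕ} (hi : 1 ≤ i) (hik : i ≤ k) (hr : r < 2) (J : ℕ) :
    blockEntry k Rm1 R0 Rr Rr' (2 * i + r) J =
      (if J = 2 * i - 2 then Rr (2 * i + r - 1) else 0) +
      (if J = 2 * i - 1 then Rr' (2 * i + r - 1) else 0) +
      (if J = 2 * i + r + 1 then 1 else 0) := by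
  unfold blockEntry
  rw [if_neg (by omega), if_neg (by omega), if_neg (by omega)]
  split_ifs <;> first | omega | simp_all

theorem sum_blockEntry_two_mul_add_mul {i r : ℕ} (hi : 1 ≤ i) (hik : i ≤ k) (hr : r < 2)
    (v : ℕ → Matrix (Fin 2) (Fin 2) R) :
    ∑ J ∈ range (2 * k + 3), blockEntry k Rm1 R0 Rr Rr' (2 * i + r) J * v J =
      Rr (2 * i + r - 1) * v (2 * i - 2) + Rr' (2 * i + r - 1) * v (2 * i - 1)
        + v (2 * i + r + 1) := by
  have h₁ : 2 * i - 2 < 2 * k + 3 := by omega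
  have h₂ : 2 * i - 1 < 2 * k + 3 := by omega
  have h₃ : 2 * i + r + 1 < 2 * k + 3 := by omega
  simp [blockEntry_two_mul_add k Rm1 R0 Rr Rr' hi hik hr, add_mul, sum_add_distrib, ite_mul,
    sum_ite_eq', h₁, h₂, h₃]

theorem sum_blockEntry_last_mul (v : ℕ → Matrix (Fin 2) (Fin 2) R) :
    ∑ J ∈ range (2 * k + 3), blockEntry k Rm1 R0 Rr Rr' (2 * k + 2) J * v J
      = v (2 * k + 2) := by
  simp [blockEntry, ite_mul, sum_ite_eq']

def nullColumn (N : ℕ → Matrix (Fin 2) (Fin 2) R) : ℕ → Matrix (Fin 2) (Fin 2) R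
  | 0 => 1
  | 1 => -Rm1
  | K + 2 => -N K

theorem nullColumn_of_two_le (N : ℕ → Matrix (Fin 2) (Fin 2) R) {K : ℕ} (hK : 2 ≤ K) :
    nullColumn Rm1 N K = -N (K - 2) := by
  obtain ⟨K, rfl⟩ := Nat.exists_eq_add_of_le' hK
  rfl

theorem sum_blockEntry_mul_nullColumn_of_lt (N : ℕ → Matrix (Fin 2) (Fin 2) R)
    (hN0 : N 0 = R0)
    (hN1 : N 1 = Rr 1 - Rr' 1 * Rm1)
    (hN2 : N 2 = Rr 2 - Rr' 2 * Rm1)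
    (hNodd : ∀ i : ℕ, 2 ≤ i → i ≤ k →
      N (2 * i - 1) = -(Rr (2 * i - 1)) * N (2 * i - 4) - Rr' (2 * i - 1) * N (2 * i - 3))
    (hNeven : ∀ i : ℕ, 2 ≤ i → i ≤ k →
      N (2 * i) = -(Rr (2 * i)) * N (2 * i - 4) - Rr' (2 * i) * N (2 * i - 3))
    {I : ℕ} (hI : I < 2 * k + 2) :
    ∑ J ∈ range (2 * k + 3), blockEntry k Rm1 R0 Rr Rr' I J * nullColumn Rm1 N J = 0 := by
  rcases Nat.lt_or_ge I 2 with hI2 | hI2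
  · obtain rfl | rfl : I = 0 ∨ I = 1 := by omega
    · rw [sum_eq_add_of_mem 0 1 (by simp) (by simp) (by simp)
        (fun J _ hJ => by simp_all [blockEntry])]
      simp [blockEntry, nullColumn]
    · rw [sum_eq_add_of_mem 0 2 (by simp) (by simp) (by simp)
        (fun J _ hJ => by simp_all [blockEntry])]
      simp [blockEntry, nullColumn, hN0]
  obtain ⟨i, r, hr, rfl⟩ : ∃ i r, r < 2 ∧ I = 2 * i + r :=
    ⟨I / 2, I % 2, by omega, by omega⟩
  rw [sum_blockEntry_two_mul_add_mul k Rm1 R0 Rr Rr' (by omega) (by omega) hr]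
  rw [nullColumn_of_two_le Rm1 N (by omega : 2 ≤ 2 * i + r + 1),
    show 2 * i + r + 1 - 2 = 2 * i + r - 1 by omega]
  rcases Nat.lt_or_ge i 2 with hi | hi
  · obtain rfl : i = 1 := by omega
    obtain rfl | rfl : r = 0 ∨ r = 1 := by omega
    · simp [nullColumn, hN1]
      abel
    · simp [nullColumn, hN2]
      abel
  · have hrec : N (2 * i + r - 1)
        = -Rr (2 * i + r - 1) * N (2 * i - 4) - Rr' (2 * i + r - 1) * N (2 * i - 3) := by
      obtain rfl | rfl : r = 0 ∨ r = 1 := by omega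
      · exact hNodd i hi (by omega)
      · exact hNeven i hi (by omega)
    rw [nullColumn_of_two_le Rm1 N (by omega), nullColumn_of_two_le Rm1 N (by omega),
      show 2 * i - 2 - 2 = 2 * i - 4 by omega, show 2 * i - 1 - 2 = 2 * i - 3 by omega, hrec]
    noncomm_ring

end BlockEntry

open Matrix Finset in
theorem det_block_matrix_eq_det_N_general {R : Type*} [CommRing R] (k : ℕ)
    (Rm1 R0 : Matrix (Fin 2) (Fin 2) R) (Rr Rr' : ℕ → Matrix (Fin 2) (Fin 2) R)
    (N : ℕ → Matrix (Fin 2) (Fin 2) R)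
    (hN0 : N 0 = R0)
    (hN1 : N 1 = Rr 1 - Rr' 1 * Rm1)
    (hN2 : N 2 = Rr 2 - Rr' 2 * Rm1)
    (hNodd : ∀ i : ℕ, 2 ≤ i → i ≤ k →
      N (2 * i - 1) = -(Rr (2 * i - 1)) * N (2 * i - 4) - Rr' (2 * i - 1) * N (2 * i - 3))
    (hNeven : ∀ i : ℕ, 2 ≤ i → i ≤ k →
      N (2 * i) = -(Rr (2 * i)) * N (2 * i - 4) - Rr' (2 * i) * N (2 * i - 3)) :
    (Matrix.of fun p q : Fin (2 * k + 3) × Fin 2 =>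
        blockEntry k Rm1 R0 Rr Rr' p.1 q.1 p.2 q.2).det
      = (N (2 * k)).det := by
  let A : Matrix (Fin (2 * k + 2 + 1)) (Fin (2 * k + 2 + 1)) (Matrix (Fin 2) (Fin 2) R) :=
    of fun I J => blockEntry k Rm1 R0 Rr Rr' I J
  have h_row : ∀ I, ∑ J, A I J * nullColumn Rm1 N J
      = ∑ J ∈ range (2 * k + 3), blockEntry k Rm1 R0 Rr Rr' I J * nullColumn Rm1 N J :=
    fun I => Fin.sum_univ_eq_sum_range
      (fun J => blockEntry k Rm1 R0 Rr Rr' I J * nullColumn Rm1 N J) _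
  calc _ = (comp _ _ _ _ R A).det := rfl
    _ = (∑ J, A (Fin.last _) J * nullColumn Rm1 N J).det := by
      refine det_comp_of_lowerHessenberg (by simp) A (fun I J h => ?_) (fun I J h => ?_) _ rfl
        (fun I hI => ?_)
      · exact blockEntry_eq_zero_of_add_two_le k Rm1 R0 Rr Rr' h
      · simp only [A, of_apply, h]
        exact blockEntry_add_one k Rm1 R0 Rr Rr' (by omega)
      · rw [h_row]
        exact sum_blockEntry_mul_nullColumn_of_lt k Rm1 R0 Rr Rr' N hN0 hN1 hN2 hNodd hNeven
          (Fin.val_lt_last hI)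
    _ = (N (2 * k)).det := by
      rw [h_row, Fin.val_last, sum_blockEntry_last_mul, nullColumn_of_two_le _ _ (by omega),
        Nat.add_sub_cancel, det_neg]
      simp

theorem det_block_matrix_eq_det_N {R : Type*} [CommRing R] (k : ℕ) (hk : 2 ≤ k)
    (Rm1 R0 : Matrix (Fin 2) (Fin 2) R) (Rr Rr' : ℕ → Matrix (Fin 2) (Fin 2) R)
    (N : ℕ → Matrix (Fin 2) (Fin 2) R)
    (hN0 : N 0 = R0)
    (hN1 : N 1 = Rr 1 - Rr' 1 * Rm1)
    (hN2 : N 2 = Rr 2 - Rr' 2 * Rm1)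
    (hNodd : ∀ i : ℕ, 2 ≤ i → i ≤ k →
      N (2 * i - 1) = -(Rr (2 * i - 1)) * N (2 * i - 4) - Rr' (2 * i - 1) * N (2 * i - 3))
    (hNeven : ∀ i : ℕ, 2 ≤ i → i ≤ k →
      N (2 * i) = -(Rr (2 * i)) * N (2 * i - 4) - Rr' (2 * i) * N (2 * i - 3)) :
    (Matrix.of fun p q : Fin (2 * k + 3) × Fin 2 =>
        blockEntry k Rm1 R0 Rr Rr' p.1 q.1 p.2 q.2).det
      = (N (2 * k)).det :=
  det_block_matrix_eq_det_N_general k Rm1 R0 Rr Rr' N hN0 hN1 hN2 hNodd hNeven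
end

section
/- Let p, q ≥ 0 be integers and let M, M', N, N' be 2×2 matrices over ℂ[t, t⁻¹] with supp M ⊆ {−p−1, …, p+1}, supp M' ⊆ {−p+1, …, p+1}, supp N ⊆ {−q, …, q}, and supp N' ⊆ {−q+1, …, q+1}. Let D ∈ ℂ[t, t⁻¹] be the determinant of the 4×4 block matrix with block rows (M, M') and (N, N'). Then supp D ⊆ {−2(p+q), …, 2(p+q)+4}, the coefficient of t^{2(p+q)+4} in D equals det(M_{p+1}) · det(N'_{q+1}), and the coefficient of t^{−2(p+q)} in D equals det(M_{−p−1}) · det(N'_{−q+1}), where P_j denotes the coefficient matrix of t^j in a Laurent polynomial matrix P. -/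
/-- The coefficient matrix of `t^j` in a matrix of Laurent polynomials. -/
noncomputable def coeffMatrix (P : Matrix (Fin 2) (Fin 2) (LaurentPolynomial ℂ)) (j : ℤ) :
    Matrix (Fin 2) (Fin 2) ℂ :=
  P.map fun p => lcoeff p j

/-!
Weight the rows of the block matrix by `p + 1, q` and the columns by `0, 1`, so that the entry in
row `i` and column `j` has degree at most `r i + c j`. Multiplying row `i` by `T ^ (-r i)` and
column `j` by `T ^ (-c j)` then moves every entry into the subring `ℂ[T⁻¹]`, on which the
coefficient of `T ^ 0` is a ring homomorphism. Hence the determinant has degree at most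
`∑ r + ∑ c = 2 (p + q) + 4`, and its coefficient there is the determinant of the matrix of
top coefficients. That matrix is block lower triangular, because the weight `p + 2` of the block
`M'` exceeds its degree, so it equals `det M_{p+1} * det N'_{q+1}`. The lowest coefficient is the
same argument after `T ↦ T⁻¹`.
-/

open LaurentPolynomial Matrix

namespace LaurentPolynomial

variable {R : Type*} [CommRing R]

theorem coeff_T_mul (a k : ℤ) (f : R[T;T⁻¹]) : (T a * f).coeff k = f.coeff (k - a) := by
  rw [T, AddMonoidAlgebra.coeff_single_mul_apply, one_mul, neg_add_eq_sub]

theorem prod_T {ι : Type*} (s : Finset ι) (a : ι → ℤ) :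
    ∏ i ∈ s, (T (a i) : R[T;T⁻¹]) = T (∑ i ∈ s, a i) := by
  simp only [T, AddMonoidAlgebra.prod_single, Finset.prod_const_one]

theorem coeff_mul_of_forall_coeff_pos_eq_zero {f g : R[T;T⁻¹]}
    (hf : ∀ k, 0 < k → f.coeff k = 0) (hg : ∀ k, 0 < k → g.coeff k = 0) {k : ℤ} (hk : 0 ≤ k) :
    (f * g).coeff k = f.coeff 0 * g.coeff k := by
  rw [AddMonoidAlgebra.coeff_mul_apply_left, Finsupp.sum_eq_single 0]
  · rw [neg_zero, zero_add]
  · intro b hb hb0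
    have hb_neg : b < 0 := lt_of_le_of_ne (not_lt.1 fun h => hb (hf b h)) hb0
    rw [hg _ (by omega), mul_zero]
  · intro _
    exact zero_mul _

variable (R) in
def nonposSubring : Subring R[T;T⁻¹] where
  carrier := {f | ∀ k, 0 < k → f.coeff k = 0}
  mul_mem' {f g} hf hg k hk := by
    rw [coeff_mul_of_forall_coeff_pos_eq_zero hf hg hk.le, hg k hk, mul_zero]
  one_mem' k hk := by simp [← T_zero, hk.ne]
  add_mem' hf hg k hk := by simp [hf k hk, hg k hk]
  zero_mem' _ _ := rfl
  neg_mem' hf k hk := by simp [hf k hk]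

theorem mem_nonposSubring {f : R[T;T⁻¹]} :
    f ∈ nonposSubring R ↔ ∀ k, 0 < k → f.coeff k = 0 :=
  Iff.rfl

def nonposConstantCoeff : nonposSubring R →+* R where
  toFun f := (f : R[T;T⁻¹]).coeff 0
  map_one' := by simp [← T_zero]
  map_mul' f g := coeff_mul_of_forall_coeff_pos_eq_zero f.2 g.2 le_rfl
  map_zero' := rfl
  map_add' _ _ := rfl

variable {m n : Type*} [Fintype m] [DecidableEq m] [Fintype n] [DecidableEq n]

theorem det_mem_nonposSubring_and_coeff_zero {B : Matrix n n R[T;T⁻¹]}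
    (hB : ∀ i j, B i j ∈ nonposSubring R) :
    B.det ∈ nonposSubring R ∧ B.det.coeff 0 = (B.map (·.coeff 0)).det := by
  set B' : Matrix n n (nonposSubring R) := of fun i j => ⟨B i j, hB i j⟩
  have hdet : B.det = B'.det := by
    rw [← Subring.coe_subtype, RingHom.map_det]
    rfl
  refine ⟨hdet ▸ B'.det.2, ?_⟩
  rw [hdet]
  exact nonposConstantCoeff.map_det B'

theorem coeff_det_of_coeff_eq_zero_of_gt (A : Matrix n n R[T;T⁻¹]) (r c : n → ℤ)
    (hA : ∀ i j k, r i + c j < k → (A i j).coeff k = 0) :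
    (∀ k, (∑ i, r i) + (∑ j, c j) < k → A.det.coeff k = 0) ∧
      A.det.coeff ((∑ i, r i) + ∑ j, c j) = (of fun i j => (A i j).coeff (r i + c j)).det := by
  set B : Matrix n n R[T;T⁻¹] := of fun i j => T (-r i) * (T (-c j) * A i j)
  have hB : ∀ i j, B i j ∈ nonposSubring R := fun i j =>
    mem_nonposSubring.2 fun k hk => by
      simp only [B, of_apply, coeff_T_mul]
      exact hA i j _ (by omega)
  have hdet : A.det = T ((∑ i, r i) + ∑ j, c j) * B.det := by
    have hrows := det_mul_column (fun i => (T (-r i) : R[T;T⁻¹])) (of fun i j => T (-c j) * A i j)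
    have hcols := det_mul_row (fun j => (T (-c j) : R[T;T⁻¹])) A
    simp only [of_apply] at hrows
    rw [hrows, hcols, prod_T, prod_T, ← mul_assoc, ← mul_assoc, ← T_add, ← T_add,
      Finset.sum_neg_distrib, Finset.sum_neg_distrib, add_assoc, ← neg_add, add_neg_cancel,
      T_zero, one_mul]
  obtain ⟨hBmem, hBcoeff⟩ := det_mem_nonposSubring_and_coeff_zero hB
  refine ⟨fun k hk => ?_, ?_⟩
  · rw [hdet, coeff_T_mul]
    exact mem_nonposSubring.1 hBmem _ (by omega)
  · rw [hdet, coeff_T_mul, sub_self, hBcoeff]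
    congr 1
    ext i j
    simp only [B, of_apply, map_apply, coeff_T_mul]
    congr 1
    ring

theorem coeff_det_fromBlocks_of_coeff_eq_zero_of_gt (A : Matrix m m R[T;T⁻¹])
    (B : Matrix m n R[T;T⁻¹]) (C : Matrix n m R[T;T⁻¹]) (D : Matrix n n R[T;T⁻¹]) (a b e : ℤ)
    (hA : ∀ i j k, a < k → (A i j).coeff k = 0) (hB : ∀ i j k, a + e ≤ k → (B i j).coeff k = 0)
    (hC : ∀ i j k, b < k → (C i j).coeff k = 0) (hD : ∀ i j k, b + e < k → (D i j).coeff k = 0) :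
    (∀ k, Fintype.card m * a + Fintype.card n * (b + e) < k →
        (fromBlocks A B C D).det.coeff k = 0) ∧
      (fromBlocks A B C D).det.coeff (Fintype.card m * a + Fintype.card n * (b + e)) =
        (A.map (·.coeff a)).det * (D.map (·.coeff (b + e))).det := by
  have h := coeff_det_of_coeff_eq_zero_of_gt (fromBlocks A B C D)
    (Sum.elim (fun _ => a) (fun _ => b)) (Sum.elim (fun _ => 0) (fun _ => e)) <| by
      rintro (i | i) (j | j) k hk <;> simp only [Sum.elim_inl, Sum.elim_inr, add_zero] at hk
      exacts [hA i j k hk, hB i j k hk.le, hC i j k hk, hD i j k hk]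
  have hsum : ∑ i : m ⊕ n, Sum.elim (fun _ => a) (fun _ => b) i +
      ∑ j : m ⊕ n, Sum.elim (fun _ => 0) (fun _ => e) j =
      Fintype.card m * a + Fintype.card n * (b + e) := by
    simp only [Fintype.sum_sum_type, Sum.elim_inl, Sum.elim_inr, Finset.sum_const,
      Finset.card_univ, Int.nsmul_eq_mul]
    ring
  have hcoeff : (of fun i j => (fromBlocks A B C D i j).coeff
      (Sum.elim (fun _ => a) (fun _ => b) i + Sum.elim (fun _ => 0) (fun _ => e) j)) =
      fromBlocks (A.map (·.coeff a)) 0 (C.map (·.coeff b)) (D.map (·.coeff (b + e))) := by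
    ext (i | i) (j | j) <;> simp [hB _ _ (a + e) le_rfl]
  rwa [hsum, hcoeff, det_fromBlocks_zero₁₂] at h

theorem coeff_det_fromBlocks_of_coeff_eq_zero_of_lt (A : Matrix m m R[T;T⁻¹])
    (B : Matrix m n R[T;T⁻¹]) (C : Matrix n m R[T;T⁻¹]) (D : Matrix n n R[T;T⁻¹]) (a b e : ℤ)
    (hA : ∀ i j k, k < a → (A i j).coeff k = 0) (hB : ∀ i j k, k ≤ a + e → (B i j).coeff k = 0)
    (hC : ∀ i j k, k < b → (C i j).coeff k = 0) (hD : ∀ i j k, k < b + e → (D i j).coeff k = 0) :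
    (∀ k, k < Fintype.card m * a + Fintype.card n * (b + e) →
        (fromBlocks A B C D).det.coeff k = 0) ∧
      (fromBlocks A B C D).det.coeff (Fintype.card m * a + Fintype.card n * (b + e)) =
        (A.map (·.coeff a)).det * (D.map (·.coeff (b + e))).det := by
  have h := coeff_det_fromBlocks_of_coeff_eq_zero_of_gt (A.map invert) (B.map invert)
    (C.map invert) (D.map invert) (-a) (-b) (-e)
    (fun i j k hk => (invert_apply _ k).trans (hA i j (-k) (by omega)))
    (fun i j k hk => (invert_apply _ k).trans (hB i j (-k) (by omega)))
    (fun i j k hk => (invert_apply _ k).trans (hC i j (-k) (by omega)))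
    (fun i j k hk => (invert_apply _ k).trans (hD i j (-k) (by omega)))
  rw [← fromBlocks_map, ← AlgEquiv.mapMatrix_apply, ← AlgEquiv.map_det] at h
  refine ⟨fun k hk => ?_, ?_⟩
  · simpa only [invert_apply, neg_neg] using h.1 (-k) (by linarith)
  · simp only [invert_apply, map_map, Function.comp_def, ← neg_add, neg_neg] at h
    convert h.2 using 2
    ring

end LaurentPolynomial

theorem SuppIn.coeff_eq_zero_of_lt {P : Matrix (Fin 2) (Fin 2) (LaurentPolynomial ℂ)}
    {a b k : ℤ} (h : SuppIn P (Set.Icc a b)) (hk : k < a) (i j : Fin 2) : (P i j).coeff k = 0 :=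
  h k (fun hk' => hk.not_ge hk'.1) i j

theorem SuppIn.coeff_eq_zero_of_gt {P : Matrix (Fin 2) (Fin 2) (LaurentPolynomial ℂ)}
    {a b k : ℤ} (h : SuppIn P (Set.Icc a b)) (hk : b < k) (i j : Fin 2) : (P i j).coeff k = 0 :=
  h k (fun hk' => hk.not_ge hk'.2) i j

theorem det_fromBlocks_support_and_extreme_coeffs
    (p q : ℕ) (M M' N N' : Matrix (Fin 2) (Fin 2) (LaurentPolynomial ℂ))
    (hM : SuppIn M (Set.Icc (-(p : ℤ) - 1) ((p : ℤ) + 1)))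
    (hM' : SuppIn M' (Set.Icc (-(p : ℤ) + 1) ((p : ℤ) + 1)))
    (hN : SuppIn N (Set.Icc (-(q : ℤ)) (q : ℤ)))
    (hN' : SuppIn N' (Set.Icc (-(q : ℤ) + 1) ((q : ℤ) + 1))) :
    (∀ j : ℤ, j ∉ Set.Icc (-(2 * ((p : ℤ) + (q : ℤ)))) (2 * ((p : ℤ) + (q : ℤ)) + 4) →
        lcoeff (Matrix.fromBlocks M M' N N').det j = 0) ∧
    lcoeff (Matrix.fromBlocks M M' N N').det (2 * ((p : ℤ) + (q : ℤ)) + 4)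
      = (coeffMatrix M ((p : ℤ) + 1)).det * (coeffMatrix N' ((q : ℤ) + 1)).det ∧
    lcoeff (Matrix.fromBlocks M M' N N').det (-(2 * ((p : ℤ) + (q : ℤ))))
      = (coeffMatrix M (-(p : ℤ) - 1)).det * (coeffMatrix N' (-(q : ℤ) + 1)).det := by
  have hhigh := coeff_det_fromBlocks_of_coeff_eq_zero_of_gt M M' N N' (p + 1) q 1
    (fun i j _ hk => hM.coeff_eq_zero_of_gt hk i j)
    (fun i j _ hk => hM'.coeff_eq_zero_of_gt (by omega) i j)
    (fun i j _ hk => hN.coeff_eq_zero_of_gt hk i j)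
    (fun i j _ hk => hN'.coeff_eq_zero_of_gt hk i j)
  have hlow := coeff_det_fromBlocks_of_coeff_eq_zero_of_lt M M' N N' (-p - 1) (-q) 1
    (fun i j _ hk => hM.coeff_eq_zero_of_lt hk i j)
    (fun i j _ hk => hM'.coeff_eq_zero_of_lt (by omega) i j)
    (fun i j _ hk => hN.coeff_eq_zero_of_lt hk i j)
    (fun i j _ hk => hN'.coeff_eq_zero_of_lt hk i j)
  simp only [Fintype.card_fin, Nat.cast_ofNat] at hhigh hlow
  refine ⟨fun k hk => ?_, ?_, ?_⟩
  · rcases not_and_or.1 hk with hk | hk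
    exacts [hlow.1 k (by omega), hhigh.1 k (by omega)]
  · rw [show 2 * ((p : ℤ) + q) + 4 = 2 * (p + 1) + 2 * (q + 1) by ring]
    exact hhigh.2
  · rw [show -(2 * ((p : ℤ) + q)) = 2 * (-p - 1) + 2 * (-q + 1) by ring]
    exact hlow.2
end

section
/- Let p be an integer. Let H_p be the presented group on three generators a, b, c with relators r₁ = (ba)² b⁻¹ c⁻¹ b a b⁻¹ c b (ba)⁻² c⁻¹ b a b⁻¹ c b (ba)⁻² a b a b⁻¹, r₂ = c (ba)² b⁻¹ c⁻¹ b a⁻¹ b⁻¹ c b a⁻¹ b⁻¹ a⁻¹ c⁻¹ a⁻¹ b⁻¹ a⁻¹ b a, and the additional relator c⁻¹ · a⁻¹([a, b][a⁻¹, b⁻¹])^p a. Let K_p be the presented group on two generators x, z with the single relator [x⁻¹, z⁻¹] x y x (z x z⁻¹) y⁻¹ · ( y z x (z x z⁻¹) y⁻¹ (z x z⁻¹)⁻¹ )⁻¹, where y abbreviates the word x⁻¹([x, z][x⁻¹, z⁻¹])^p x. Then the group homomorphism H_p → K_p determined by a ↦ x, b ↦ z, c ↦ x⁻¹([x, z][x⁻¹,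 z⁻¹])^p x is well defined and is an isomorphism. -/
/-!
In any group, the relator of `K_p` evaluated at `(x, z, y)` is the inverse of `r₂` evaluated at
`(x, z, y)`, and `r₁` evaluated at `(a, b, a⁻¹ Q a)` is a product of a conjugate of `r₂⁻¹` and a
conjugate of `⁅Q, C⁆`, where `C = ⁅a, b⁆⁅a⁻¹, b⁻¹⁆`. For `Q = C ^ p` this commutator is trivial,
so `r₁` is a consequence of the other relators of `H_p`; the third relator then just eliminates
the generator `c = y`, and what remains is the presentation of `K_p`.
-/

namespace Stmt14

open scoped commutatorElement

/-- The relators of the presented group `H_p` on the three generators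
`a, b, c` (encoded as `0, 1, 2 : Fin 3`): the two relators `r₁, r₂` together
with the additional relator `c⁻¹ · a⁻¹([a,b][a⁻¹,b⁻¹])^p a`. -/
def relsH (p : ℤ) : Set (FreeGroup (Fin 3)) :=
  let a : FreeGroup (Fin 3) := FreeGroup.of 0
  let b : FreeGroup (Fin 3) := FreeGroup.of 1
  let c : FreeGroup (Fin 3) := FreeGroup.of 2
  { (b * a) ^ 2 * b⁻¹ * c⁻¹ * b * a * b⁻¹ * c * b * ((b * a) ^ 2)⁻¹ *
      c⁻¹ * b * a * b⁻¹ * c * b * ((b * a) ^ 2)⁻¹ * a * b * a * b⁻¹,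
    c * (b * a) ^ 2 * b⁻¹ * c⁻¹ * b * a⁻¹ * b⁻¹ * c * b * a⁻¹ * b⁻¹ * a⁻¹ *
      c⁻¹ * a⁻¹ * b⁻¹ * a⁻¹ * b * a,
    c⁻¹ * (a⁻¹ * (⁅a, b⁆ * ⁅a⁻¹, b⁻¹⁆) ^ p * a) }

/-- The single relator of the presented group `K_p` on the two generators
`x, z` (encoded as `0, 1 : Fin 2`), where `y` abbreviates
`x⁻¹([x,z][x⁻¹,z⁻¹])^p x`. -/
def relsK (p : ℤ) : Set (FreeGroup (Fin 2)) :=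
  let x : FreeGroup (Fin 2) := FreeGroup.of 0
  let z : FreeGroup (Fin 2) := FreeGroup.of 1
  let y : FreeGroup (Fin 2) := x⁻¹ * (⁅x, z⁆ * ⁅x⁻¹, z⁻¹⁆) ^ p * x
  { ⁅x⁻¹, z⁻¹⁆ * x * y * x * (z * x * z⁻¹) * y⁻¹ *
      (y * z * x * (z * x * z⁻¹) * y⁻¹ * (z * x * z⁻¹)⁻¹)⁻¹ }

section Words

variable {G G' : Type*} [Group G] [Group G']

def yWord (p : ℤ) (a b : G) : G := a⁻¹ * (⁅a, b⁆ * ⁅a⁻¹, b⁻¹⁆) ^ p * a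

def relH₁ (a b c : G) : G :=
  (b * a) ^ 2 * b⁻¹ * c⁻¹ * b * a * b⁻¹ * c * b * ((b * a) ^ 2)⁻¹ *
    c⁻¹ * b * a * b⁻¹ * c * b * ((b * a) ^ 2)⁻¹ * a * b * a * b⁻¹

def relH₂ (a b c : G) : G :=
  c * (b * a) ^ 2 * b⁻¹ * c⁻¹ * b * a⁻¹ * b⁻¹ * c * b * a⁻¹ * b⁻¹ * a⁻¹ *
    c⁻¹ * a⁻¹ * b⁻¹ * a⁻¹ * b * a

def relK (x z y : G) : G :=
  ⁅x⁻¹, z⁻¹⁆ * x * y * x * (z * x * z⁻¹) * y⁻¹ *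
    (y * z * x * (z * x * z⁻¹) * y⁻¹ * (z * x * z⁻¹)⁻¹)⁻¹

theorem map_yWord (f : G →* G') (p : ℤ) (a b : G) : f (yWord p a b) = yWord p (f a) (f b) := by
  simp only [yWord, map_mul, map_inv, map_zpow, map_commutatorElement]

theorem map_relH₁ (f : G →* G') (a b c : G) : f (relH₁ a b c) = relH₁ (f a) (f b) (f c) := by
  simp only [relH₁, map_mul, map_inv, map_pow]

theorem map_relH₂ (f : G →* G') (a b c : G) : f (relH₂ a b c) = relH₂ (f a) (f b) (f c) := by
  simp only [relH₂, map_mul, map_inv, map_pow]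

theorem map_relK (f : G →* G') (x z y : G) : f (relK x z y) = relK (f x) (f z) (f y) := by
  simp only [relK, map_mul, map_inv, map_commutatorElement]

theorem relK_eq_inv_relH₂ (x z y : G) : relK x z y = (relH₂ x z y)⁻¹ := by
  simp only [relK, relH₂, commutatorElement_def, pow_two]
  group

theorem relH₁_eq_conj_mul_conj (a b Q : G) :
    relH₁ a b (a⁻¹ * Q * a) =
      (b * a⁻¹ * Q⁻¹ * b⁻¹ * a⁻¹ * b * a) * (relH₂ a b (a⁻¹ * Q * a))⁻¹ *
        (b * a⁻¹ * Q⁻¹ * b⁻¹ * a⁻¹ * b * a)⁻¹ *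
      ((b * a⁻¹ * b⁻¹ * a⁻¹ * b * a * b * a * b⁻¹ * a⁻¹ * Q⁻¹) * ⁅Q, ⁅a, b⁆ * ⁅a⁻¹, b⁻¹⁆⁆ *
        (b * a⁻¹ * b⁻¹ * a⁻¹ * b * a * b * a * b⁻¹ * a⁻¹ * Q⁻¹)⁻¹) := by
  simp only [relH₁, relH₂, commutatorElement_def, pow_two]
  group

theorem relH₁_eq_one_of_commute {a b Q : G} (hQ : Commute Q (⁅a, b⁆ * ⁅a⁻¹, b⁻¹⁆))
    (h : relH₂ a b (a⁻¹ * Q * a) = 1) : relH₁ a b (a⁻¹ * Q * a) = 1 := by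
  rw [relH₁_eq_conj_mul_conj, h, commutatorElement_eq_one_iff_commute.2 hQ]
  group

theorem relH₁_yWord_eq_one {p : ℤ} {a b : G} (h : relH₂ a b (yWord p a b) = 1) :
    relH₁ a b (yWord p a b) = 1 :=
  relH₁_eq_one_of_commute ((Commute.refl _).zpow_left p) h

end Words

theorem PresentedGroup.lift_of_eq_one {α : Type*} {rels : Set (FreeGroup α)} :
    ∀ r ∈ rels, FreeGroup.lift (PresentedGroup.of (rels := rels)) r = 1 :=
  fun _ hr => (FreeGroup.lift_unique (PresentedGroup.mk rels) fun _ => rfl).symm.trans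
    (PresentedGroup.one_of_mem hr)

section Presentations

variable {G : Type*} [Group G] (p : ℤ)

open FreeGroup in
theorem relsH_eq : relsH p =
    {relH₁ (of 0) (of 1) (of 2), relH₂ (of 0) (of 1) (of 2), (of 2)⁻¹ * yWord p (of 0) (of 1)} :=
  rfl

open FreeGroup in
theorem relsK_eq : relsK p = {relK (of 0) (of 1) (yWord p (of 0) (of 1))} :=
  rfl

theorem lift_relsH_eq_one_iff {f : Fin 3 → G} :
    (∀ r ∈ relsH p, FreeGroup.lift f r = 1) ↔
      relH₁ (f 0) (f 1) (f 2) = 1 ∧ relH₂ (f 0) (f 1) (f 2) = 1 ∧ f 2 = yWord p (f 0) (f 1) := by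
  simp only [relsH_eq, Set.mem_insert_iff, Set.mem_singleton_iff, forall_eq_or_imp, forall_eq,
    map_relH₁, map_relH₂, map_mul, map_inv, map_yWord, FreeGroup.lift_apply_of, inv_mul_eq_one]

theorem lift_relsK_eq_one_iff {f : Fin 2 → G} :
    (∀ r ∈ relsK p, FreeGroup.lift f r = 1) ↔ relK (f 0) (f 1) (yWord p (f 0) (f 1)) = 1 := by
  simp only [relsK_eq, Set.mem_singleton_iff, forall_eq, map_relK, map_yWord,
    FreeGroup.lift_apply_of]

end Presentations

section Isomorphism

variable (p : ℤ)

theorem of_two_eq_yWord :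
    (PresentedGroup.of 2 : PresentedGroup (relsH p)) = yWord p (.of 0) (.of 1) :=
  ((lift_relsH_eq_one_iff p).1 PresentedGroup.lift_of_eq_one).2.2

theorem relH₂_of : relH₂ (.of 0) (.of 1) (.of 2 : PresentedGroup (relsH p)) = 1 :=
  ((lift_relsH_eq_one_iff p).1 PresentedGroup.lift_of_eq_one).2.1

theorem lift_relsH_yWord_eq_one :
    ∀ r ∈ relsH p, FreeGroup.lift
      (![.of 0, .of 1, yWord p (.of 0) (.of 1)] : Fin 3 → PresentedGroup (relsK p)) r = 1 := by
  have h₂ : relH₂ (.of 0) (.of 1) (yWord p (.of 0) (.of 1) : PresentedGroup (relsK p)) = 1 :=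
    inv_eq_one.1 <| (relK_eq_inv_relH₂ _ _ _).symm.trans <|
      (lift_relsK_eq_one_iff p).1 PresentedGroup.lift_of_eq_one
  exact (lift_relsH_eq_one_iff p).2 ⟨relH₁_yWord_eq_one h₂, h₂, rfl⟩

theorem lift_relsK_of_eq_one :
    ∀ r ∈ relsK p, FreeGroup.lift (![.of 0, .of 1] : Fin 2 → PresentedGroup (relsH p)) r = 1 := by
  refine (lift_relsK_eq_one_iff p).2 ?_
  change relK (.of 0) (.of 1) (yWord p (.of 0) (.of 1) : PresentedGroup (relsH p)) = 1
  rw [relK_eq_inv_relH₂, ← of_two_eq_yWord, relH₂_of, inv_one]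

def toK : PresentedGroup (relsH p) →* PresentedGroup (relsK p) :=
  PresentedGroup.toGroup (lift_relsH_yWord_eq_one p)

def toH : PresentedGroup (relsK p) →* PresentedGroup (relsH p) :=
  PresentedGroup.toGroup (lift_relsK_of_eq_one p)

theorem toK_of (i : Fin 3) : toK p (.of i) = ![.of 0, .of 1, yWord p (.of 0) (.of 1)] i :=
  PresentedGroup.toGroup.of _

theorem toH_of (i : Fin 2) : toH p (.of i) = ![.of 0, .of 1] i :=
  PresentedGroup.toGroup.of _

theorem toH_comp_toK : (toH p).comp (toK p) = .id _ := by
  refine PresentedGroup.ext fun i => ?_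
  rw [MonoidHom.comp_apply, toK_of, MonoidHom.id_apply]
  fin_cases i
  · exact toH_of p 0
  · exact toH_of p 1
  · exact (map_yWord _ p _ _).trans (of_two_eq_yWord p).symm

theorem toK_comp_toH : (toK p).comp (toH p) = .id _ := by
  refine PresentedGroup.ext fun i => ?_
  rw [MonoidHom.comp_apply, toH_of, MonoidHom.id_apply]
  fin_cases i
  · exact toK_of p 0
  · exact toK_of p 1

end Isomorphism

theorem hom_is_well_defined_and_isomorphism (p : ℤ) :
    ∃ φ : PresentedGroup (relsH p) →* PresentedGroup (relsK p),
      φ (PresentedGroup.of 0) = PresentedGroup.of 0 ∧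
      φ (PresentedGroup.of 1) = PresentedGroup.of 1 ∧
      φ (PresentedGroup.of 2) =
        (PresentedGroup.of 0)⁻¹ *
          (⁅(PresentedGroup.of 0 : PresentedGroup (relsK p)), PresentedGroup.of 1⁆ *
            ⁅(PresentedGroup.of 0 : PresentedGroup (relsK p))⁻¹, (PresentedGroup.of 1)⁻¹⁆) ^ p *
          PresentedGroup.of 0 ∧
      Function.Bijective φ :=
  ⟨toK p, toK_of p 0, toK_of p 1, toK_of p 2,
    (MonoidHom.toMulEquiv _ _ (toH_comp_toK p) (toK_comp_toH p)).bijective⟩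

end Stmt14
end
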